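/- arXiv:2208.08103 — 4 statements merged into one kernel-verified Lean document; each statement's English description precedes it below -/
import Mathlib

section
/- For every real number x ≠ 0, x·coth(x) ≤ 1 + x²/3. Equivalently, for every x > 0, 3x ≤ (3 + x²)·tanh(x). -/
open Real

noncomputable def coth (x : ℝ) : ℝ := Real.cosh x / Real.sinh x

/-!
Both inequalities say `3 x cosh x ≤ (3 + x²) sinh x` for `x > 0` (extended to `x < 0` by
parity). The difference vanishes at `0` and has derivative `x (x cosh x - sinh x)`, whose
second factor again vanishes at `0` and has derivative `x sinh x ≥ 0`.
-/

lemma le_of_hasDerivAt_nonneg_of_le {f f' : ℝ → ℝ} {a x : ℝ}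
    (hf : ∀ y, HasDerivAt f (f' y) y) (hf' : ∀ y, a < y → 0 ≤ f' y) (hx : a ≤ x) :
    f a ≤ f x :=
  monotoneOn_of_hasDerivWithinAt_nonneg (convex_Ici a)
    (continuous_iff_continuousAt.2 fun y => (hf y).continuousAt).continuousOn
    (fun y _ => (hf y).hasDerivWithinAt) (fun y hy => hf' y (by rwa [interior_Ici] at hy))
    Set.self_mem_Ici hx hx

lemma sinh_le_mul_cosh {x : ℝ} (hx : 0 ≤ x) : sinh x ≤ x * cosh x := by
  have hderiv (y : ℝ) : HasDerivAt (fun x => x * cosh x - sinh x) (y * sinh y) y := by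
    refine (((hasDerivAt_id y).mul (hasDerivAt_cosh y)).sub (hasDerivAt_sinh y)).congr_deriv ?_
    simp only [id, one_mul, add_sub_cancel_left]
  have := le_of_hasDerivAt_nonneg_of_le hderiv
    (fun y hy => mul_nonneg hy.le (sinh_nonneg_iff.2 hy.le)) hx
  simpa using this

lemma three_mul_mul_cosh_le {x : ℝ} (hx : 0 ≤ x) :
    3 * x * cosh x ≤ (3 + x ^ 2) * sinh x := by
  have hderiv (y : ℝ) : HasDerivAt (fun x => (3 + x ^ 2) * sinh x - 3 * x * cosh x)
      (y * (y * cosh y - sinh y)) y := by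
    refine ((((hasDerivAt_pow 2 y).const_add 3).mul (hasDerivAt_sinh y)).sub
      (((hasDerivAt_id y).const_mul 3).mul (hasDerivAt_cosh y))).congr_deriv ?_
    simp only [id]
    ring
  have := le_of_hasDerivAt_nonneg_of_le hderiv
    (fun y hy => mul_nonneg hy.le (sub_nonneg.2 (sinh_le_mul_cosh hy.le))) hx
  simpa using this

lemma coth_neg (x : ℝ) : coth (-x) = -coth x := by
  simp only [coth, cosh_neg, sinh_neg, div_neg]

lemma mul_coth_le_of_pos {x : ℝ} (hx : 0 < x) : x * coth x ≤ 1 + x ^ 2 / 3 := by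
  rw [coth, mul_div_assoc', div_le_iff₀ (sinh_pos_iff.2 hx)]
  linarith [three_mul_mul_cosh_le hx.le]

/-- For every x ≠ 0, x·coth x ≤ 1 + x²/3; equivalently, for every x > 0,
    3x ≤ (3 + x²)·tanh x. -/
theorem stmt1 :
    (∀ x : ℝ, x ≠ 0 → x * coth x ≤ 1 + x ^ 2 / 3) ∧
      (∀ x : ℝ, 0 < x → 3 * x ≤ (3 + x ^ 2) * Real.tanh x) := by
  refine ⟨fun x hx => ?_, fun x hx => ?_⟩
  · rcases hx.lt_or_gt with hneg | hpos
    · simpa [coth_neg] using mul_coth_le_of_pos (neg_pos.2 hneg)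
    · exact mul_coth_le_of_pos hpos
  · rw [tanh_eq_sinh_div_cosh, mul_div_assoc', le_div_iff₀ (cosh_pos x)]
    exact three_mul_mul_cosh_le hx.le
end

section
/- Let ϱ > 0, d > 0 and β ≥ (ϱ + d)/3. Then for all real ξ, ϱ·ξ·coth(ξ) + ξ·coth(d·ξ) − β·ξ² ≤ ϱ + 1/d, where the left-hand side is extended continuously by the value ϱ + 1/d at ξ = 0. Consequently the supremum over ξ ∈ ℝ of ϱ·ξ·coth(ξ) + ξ·coth(d·ξ) − β·ξ² equals ϱ + 1/d. -/
/-!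
For `x ≠ 0` one has `x coth x ≤ 1 + x²/3`: for `x > 0` the difference
`(1 + x²/3) sinh x - x cosh x` vanishes at `0` and has derivative
`x/3 · (x cosh x - sinh x) ≥ 0`, and `x coth x` is even. Applied to `ξ` and to `dξ` this
bounds the symbol by `ϱ + 1/d + ((ϱ + d)/3 - β) ξ² ≤ ϱ + 1/d`, a value attained at `ξ = 0`.
-/

open Real

lemma nonneg_of_hasDerivAt_of_map_zero {f f' : ℝ → ℝ} (hf : ∀ t, HasDerivAt f (f' t) t)
    (h0 : f 0 = 0) (hf' : ∀ t, 0 < t → 0 ≤ f' t) {x : ℝ} (hx : 0 ≤ x) : 0 ≤ f x := by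
  have hmono : MonotoneOn f (Set.Ici 0) := by
    refine monotoneOn_of_hasDerivWithinAt_nonneg (convex_Ici 0)
      (fun t _ => (hf t).continuousAt.continuousWithinAt)
      (fun t _ => (hf t).hasDerivWithinAt) fun t ht => hf' t ?_
    simpa using ht
  simpa [h0] using hmono Set.self_mem_Ici (Set.mem_Ici.2 hx) hx

lemma mul_cosh_le {x : ℝ} (hx : 0 ≤ x) : x * cosh x ≤ (1 + x ^ 2 / 3) * sinh x := by
  have hderiv (t : ℝ) : HasDerivAt (fun t => (1 + t ^ 2 / 3) * sinh t - t * cosh t)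
      (t / 3 * (t * cosh t - sinh t)) t := by
    have hpoly : HasDerivAt (fun t : ℝ => 1 + t ^ 2 / 3) (2 * t / 3) t := by
      simpa using ((hasDerivAt_pow 2 t).div_const 3).const_add 1
    exact ((hpoly.fun_mul (hasDerivAt_sinh t)).fun_sub
      ((hasDerivAt_id' t).fun_mul (hasDerivAt_cosh t))).congr_deriv (by ring)
  have := nonneg_of_hasDerivAt_of_map_zero hderiv (by simp)
    (fun t ht => mul_nonneg (by positivity) (sub_nonneg.2 (sinh_le_mul_cosh ht.le))) hx
  linarith

lemma mul_coth_le {x : ℝ} (hx : x ≠ 0) : x * coth x ≤ 1 + x ^ 2 / 3 := by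
  rcases hx.lt_or_gt with hneg | hpos
  · simpa [coth_neg] using mul_coth_le_of_pos (neg_pos.2 hneg)
  · exact mul_coth_le_of_pos hpos

lemma mul_coth_mul_le {d ξ : ℝ} (hd : 0 < d) (hξ : ξ ≠ 0) :
    ξ * coth (d * ξ) ≤ 1 / d + d * ξ ^ 2 / 3 :=
  calc ξ * coth (d * ξ) = d * ξ * coth (d * ξ) / d := by field_simp
    _ ≤ (1 + (d * ξ) ^ 2 / 3) / d := by gcongr; exact mul_coth_le (mul_ne_zero hd.ne' hξ)
    _ = 1 / d + d * ξ ^ 2 / 3 := by field_simp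

/-- The symbol ϱ·ξ·coth ξ + ξ·coth (d·ξ) − β·ξ², extended by ϱ + 1/d at ξ = 0,
    is bounded above by ϱ + 1/d when β ≥ (ϱ+d)/3, and its supremum is ϱ + 1/d. -/
theorem stmt2 (ϱ d β : ℝ) (hϱ : 0 < ϱ) (hd : 0 < d) (hβ : (ϱ + d) / 3 ≤ β) :
    (∀ ξ : ℝ,
        (if ξ = 0 then ϱ + 1 / d
          else ϱ * ξ * coth ξ + ξ * coth (d * ξ) - β * ξ ^ 2) ≤ ϱ + 1 / d) ∧
      IsLUB (Set.range fun ξ : ℝ =>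
          (if ξ = 0 then ϱ + 1 / d
            else ϱ * ξ * coth ξ + ξ * coth (d * ξ) - β * ξ ^ 2)) (ϱ + 1 / d) := by
  have hbound (ξ : ℝ) : (if ξ = 0 then ϱ + 1 / d
      else ϱ * ξ * coth ξ + ξ * coth (d * ξ) - β * ξ ^ 2) ≤ ϱ + 1 / d := by
    split_ifs with hξ
    · rfl
    have hfirst : ϱ * (ξ * coth ξ) ≤ ϱ * (1 + ξ ^ 2 / 3) :=
      mul_le_mul_of_nonneg_left (mul_coth_le hξ) hϱ.le
    have hsecond := mul_coth_mul_le hd hξ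
    have hβξ : (ϱ + d) / 3 * ξ ^ 2 ≤ β * ξ ^ 2 := by gcongr
    linarith
  refine ⟨hbound, IsGreatest.isLUB ⟨⟨0, if_pos rfl⟩, ?_⟩⟩
  rintro _ ⟨ξ, rfl⟩
  exact hbound ξ
end

section
/- Let ϱ, d > 0, let Ω, α, β be real numbers, and define D : ℝ → ℝ by D(k) = ϱ·k·coth(k) + k·coth(d·k) + Ω − α − β·k² for k ≠ 0, with D(0) := ϱ + 1/d + Ω − α. Then: (i) D(0) = 0 if and only if α = α₀ := ϱ + 1/d + Ω; and (ii) if α = α₀, then the limit as k → 0 of D(k)/k² equals (ϱ + d)/3 − β; in particular k = 0 is a root of D of order at least 4 exactly when additionally β = β₀ := (ϱ + d)/3. -/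
/-! Everything reduces to the expansion `x coth x = 1 + x²/3 + o(x²)`, obtained from
L'Hôpital's rule for `(x cosh x - sinh x) / x³`; rescaling `x = d k` turns it into
`k coth (d k) = 1/d + d k²/3 + o(k²)`, and `D k / k²` is a linear combination of these. -/

open Real Filter Topology

lemma tendsto_sinh_div_self : Tendsto (fun x : ℝ => sinh x / x) (𝓝[≠] 0) (𝓝 1) := by
  have h := hasDerivAt_iff_tendsto_slope.mp (hasDerivAt_sinh 0)
  rw [cosh_zero] at h
  exact h.congr fun x => by simp [slope_def_field]

lemma tendsto_mul_cosh_sub_sinh_div_pow_three :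
    Tendsto (fun x : ℝ => (x * cosh x - sinh x) / x ^ 3) (𝓝[≠] 0) (𝓝 (1 / 3)) := by
  have hnum : Continuous fun x : ℝ => x * cosh x - sinh x := by fun_prop
  refine HasDerivAt.lhopital_zero_nhdsNE (f' := fun x => x * sinh x) (g' := fun x => 3 * x ^ 2)
    (Eventually.of_forall fun x => ?_) (Eventually.of_forall fun x => by simpa using hasDerivAt_pow 3 x)
    (eventually_nhdsWithin_of_forall fun x (hx : x ≠ 0) => by positivity)
    (by simpa using (hnum.tendsto 0).mono_left nhdsWithin_le_nhds)
    (by simpa using ((continuous_pow 3).tendsto (0 : ℝ)).mono_left nhdsWithin_le_nhds) ?_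
  · have h : HasDerivAt (fun x => x * cosh x - sinh x) (1 * cosh x + x * sinh x - cosh x) x :=
      ((hasDerivAt_id' x).mul (hasDerivAt_cosh x)).sub (hasDerivAt_sinh x)
    convert h using 1
    ring
  · refine (tendsto_sinh_div_self.div_const 3).congr' ?_
    filter_upwards [self_mem_nhdsWithin] with x (hx : x ≠ 0)
    field_simp

lemma tendsto_mul_coth_sub_one_div_sq :
    Tendsto (fun x : ℝ => (x * coth x - 1) / x ^ 2) (𝓝[≠] 0) (𝓝 (1 / 3)) := by
  have h := tendsto_mul_cosh_sub_sinh_div_pow_three.mul (tendsto_sinh_div_self.inv₀ one_ne_zero)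
  rw [inv_one, mul_one] at h
  refine h.congr' ?_
  filter_upwards [self_mem_nhdsWithin] with x (hx : x ≠ 0)
  have hs : sinh x ≠ 0 := sinh_ne_zero.mpr hx
  simp only [coth]
  field_simp

lemma tendsto_mul_coth_mul_sub_inv_div_sq (d : ℝ) :
    Tendsto (fun k : ℝ => (k * coth (d * k) - 1 / d) / k ^ 2) (𝓝[≠] 0) (𝓝 (d / 3)) := by
  -- for `d = 0` both `coth 0` and `1 / 0` are junk zeros, so the function vanishes identically
  rcases eq_or_ne d 0 with rfl | hd
  · simp [coth]
  have hscale : Tendsto (fun k : ℝ => d * k) (𝓝[≠] 0) (𝓝[≠] 0) := by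
    refine tendsto_nhdsWithin_of_tendsto_nhds_of_eventually_within _ ?_
      (eventually_nhdsWithin_of_forall fun k (hk : k ≠ 0) => mul_ne_zero hd hk)
    simpa using ((continuous_const_mul d).tendsto 0).mono_left nhdsWithin_le_nhds
  have h := (tendsto_mul_coth_sub_one_div_sq.comp hscale).const_mul d
  rw [mul_one_div] at h
  refine h.congr' ?_
  filter_upwards [self_mem_nhdsWithin] with k (hk : k ≠ 0)
  simp only [Function.comp_apply]
  field_simp

theorem stmt3_general (ϱ d Ω α β : ℝ)
    (D : ℝ → ℝ)
    (hD : ∀ k : ℝ, k ≠ 0 →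
      D k = ϱ * k * coth k + k * coth (d * k) + Ω - α - β * k ^ 2)
    (hD0 : D 0 = ϱ + 1 / d + Ω - α) :
    (D 0 = 0 ↔ α = ϱ + 1 / d + Ω) ∧
      (α = ϱ + 1 / d + Ω →
        Tendsto (fun k : ℝ => D k / k ^ 2) (𝓝[≠] (0 : ℝ))
          (𝓝 ((ϱ + d) / 3 - β))) := by
  refine ⟨by rw [hD0, sub_eq_zero, eq_comm], fun hα => ?_⟩
  have h := ((tendsto_mul_coth_sub_one_div_sq.const_mul ϱ).add
    (tendsto_mul_coth_mul_sub_inv_div_sq d)).sub_const β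
  rw [mul_one_div, ← add_div] at h
  refine h.congr' ?_
  filter_upwards [self_mem_nhdsWithin] with k (hk : k ≠ 0)
  rw [hD k hk, hα]
  field_simp
  ring

/-- The dispersion relation of the linearized two-layer problem with constant
    vorticity: `D 0 = 0 ↔ α = α₀ := ϱ + 1/d + Ω`, and if `α = α₀` then
    `D k / k² → (ϱ+d)/3 − β` as `k → 0`. -/
theorem stmt3 (ϱ d Ω α β : ℝ) (hϱ : 0 < ϱ) (hd : 0 < d)
    (D : ℝ → ℝ)
    (hD : ∀ k : ℝ, k ≠ 0 →
      D k = ϱ * k * coth k + k * coth (d * k) + Ω - α - β * k ^ 2)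
    (hD0 : D 0 = ϱ + 1 / d + Ω - α) :
    (D 0 = 0 ↔ α = ϱ + 1 / d + Ω) ∧
      (α = ϱ + 1 / d + Ω →
        Tendsto (fun k : ℝ => D k / k ^ 2) (𝓝[≠] (0 : ℝ))
          (𝓝 ((ϱ + d) / 3 - β))) :=
  stmt3_general ϱ d Ω α β D hD hD0
end

section
/- Let β, ϱ, d, c, d₊, ω₊, ω₋ be real numbers with c ≠ 0. Define e₁ to have components η = 1, γ = 0, φ̄₊ = 0, Γ₊(z) = (ω₊d₊ϱ/c)·(z − z²), φ̄₋ = 0, Γ₋(z) = (ω₋d₊d/c)·(z − z²), and e₂ to have components η = 0, γ = β − (ϱ+d)/3 − (ω₊d₊ϱ − ω₋d₊d²)/(12c), φ̄₊(z) = (z² − 1/3)/2, Γ₊ = 0, φ̄₋(z) = −d·(z² − 1/3)/2, Γ₋ = 0. Then the symplectic form Ω̃(e₁, e₂) := γ(e₂)·η(e₁) − η(e₂)·γ(e₁) + ∫₀¹ (Γ₊'(e₂)·φ̄₊(e₁) − φ̄₊(e₂)·Γ₊'(e₁)) dz + ∫₀¹ (Γ₋'(e₂)·φ̄₋(e₁)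 − φ̄₋(e₂)·Γ₋'(e₁)) dz equals β − (ϱ + d)/3. -/
set_option linter.unnecessarySimpa false
set_option linter.unusedVariables false

lemma derivK (K : ℝ) : deriv (fun z : ℝ => K * (z - z ^ 2)) = fun z => K * (1 - 2 * z) := by
  funext z
  have h : HasDerivAt (fun z : ℝ => K * (z - z ^ 2)) (K * (1 - 2 * z ^ 1)) z :=
    ((hasDerivAt_id z).sub (hasDerivAt_pow 2 z)).const_mul K
  simpa using h.deriv

lemma intK (K : ℝ) : (∫ z in (0:ℝ)..1, K * (z ^ 3 - z ^ 2 / 2 - z / 3 + 1 / 6)) = K / 12 := by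
  rw [intervalIntegral.integral_const_mul]
  have h : (∫ z in (0:ℝ)..1, (z ^ 3 - z ^ 2 / 2 - z / 3 + 1 / 6)) = 1 / 12 := by
    have h1 : (∫ z in (0:ℝ)..1, (z ^ 3 - z ^ 2 / 2 - z / 3 + 1 / 6))
        = (∫ z in (0:ℝ)..1, z ^ 3) - (∫ z in (0:ℝ)..1, z ^ 2) / 2
          - (∫ z in (0:ℝ)..1, z) / 3 + (∫ z in (0:ℝ)..1, (1:ℝ)) / 6 := by
      rw [← intervalIntegral.integral_div, ← intervalIntegral.integral_div,
        ← intervalIntegral.integral_div, ← intervalIntegral.integral_sub,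
        ← intervalIntegral.integral_sub, ← intervalIntegral.integral_add] <;>
      exact Continuous.intervalIntegrable (by continuity) _ _
    rw [h1]
    simp [integral_pow, integral_id]
    norm_num
  rw [h]; ring


/-- The symplectic pairing of the eigenvector e₁ and generalized eigenvector e₂
    of the 0² resonance equals β* := β − (ϱ+d)/3.  Here
    e₁ = (η₁, γ₁, φ̄₊₁, Γ₊₁, φ̄₋₁, Γ₋₁) and e₂ = (η₂, γ₂, φ̄₊₂, Γ₊₂, φ̄₋₂, Γ₋₂)
    with the components as in the paper, and
    Ω̃(e₁,e₂) = γ₂·η₁ − η₂·γ₁ + ∫₀¹ (Γ₊₂'·φ̄₊₁ − φ̄₊₂·Γ₊₁') dz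
              + ∫₀¹ (Γ₋₂'·φ̄₋₁ − φ̄₋₂·Γ₋₁') dz. -/
theorem stmt11 (β ϱ d c dp ωp ωm : ℝ) (hc : c ≠ 0)
    (η₁ γ₁ η₂ γ₂ : ℝ) (φp₁ Γp₁ φm₁ Γm₁ φp₂ Γp₂ φm₂ Γm₂ : ℝ → ℝ)
    (hη₁ : η₁ = 1) (hγ₁ : γ₁ = 0)
    (hφp₁ : ∀ z, φp₁ z = 0)
    (hΓp₁ : ∀ z, Γp₁ z = ωp * dp * ϱ / c * (z - z ^ 2))
    (hφm₁ : ∀ z, φm₁ z = 0)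
    (hΓm₁ : ∀ z, Γm₁ z = ωm * dp * d / c * (z - z ^ 2))
    (hη₂ : η₂ = 0)
    (hγ₂ : γ₂ = β - (ϱ + d) / 3 - (ωp * dp * ϱ - ωm * dp * d ^ 2) / (12 * c))
    (hφp₂ : ∀ z, φp₂ z = (z ^ 2 - 1 / 3) / 2)
    (hΓp₂ : ∀ z, Γp₂ z = 0)
    (hφm₂ : ∀ z, φm₂ z = -d * (z ^ 2 - 1 / 3) / 2)
    (hΓm₂ : ∀ z, Γm₂ z = 0) :
    γ₂ * η₁ - η₂ * γ₁
      + (∫ z in (0:ℝ)..1, (deriv Γp₂ z * φp₁ z - φp₂ z * deriv Γp₁ z))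
      + (∫ z in (0:ℝ)..1, (deriv Γm₂ z * φm₁ z - φm₂ z * deriv Γm₁ z))
      = β - (ϱ + d) / 3 := by
  have eΓp₁ : Γp₁ = fun z => ωp * dp * ϱ / c * (z - z ^ 2) := funext hΓp₁
  have eΓm₁ : Γm₁ = fun z => ωm * dp * d / c * (z - z ^ 2) := funext hΓm₁
  have eΓp₂ : deriv Γp₂ = fun _ => 0 := by
    have : Γp₂ = fun _ => 0 := funext hΓp₂
    simp [this]
  have eΓm₂ : deriv Γm₂ = fun _ => 0 := by
    have : Γm₂ = fun _ => 0 := funext hΓm₂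
    simp [this]
  have I1 : (∫ z in (0:ℝ)..1, (deriv Γp₂ z * φp₁ z - φp₂ z * deriv Γp₁ z))
      = (ωp * dp * ϱ / c) / 12 := by
    rw [← intK (ωp * dp * ϱ / c)]
    apply intervalIntegral.integral_congr
    intro z _
    simp only [eΓp₂, eΓp₁, derivK, hφp₂]
    ring
  have I2 : (∫ z in (0:ℝ)..1, (deriv Γm₂ z * φm₁ z - φm₂ z * deriv Γm₁ z))
      = (-(ωm * dp * d ^ 2 / c)) / 12 := by
    have : -(ωm * dp * d ^ 2 / c) / 12 = -d * ((ωm * dp * d / c) / 12) := by ring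
    rw [this, ← intK (ωm * dp * d / c), ← intervalIntegral.integral_const_mul]
    apply intervalIntegral.integral_congr
    intro z _
    simp only [eΓm₂, eΓm₁, derivK, hφm₂]
    ring
  rw [I1, I2, hη₁, hγ₁, hη₂, hγ₂]
  field_simp
  ring
end
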